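/- For x, y ∈ (0,1), the Kullback-Leibler divergence from Bernoulli(x) to Bernoulli(y) satisfies D_KL(Ber(x) ‖ Ber(y)) ≥ (x-y)²/(2·max{x,y}). -/

import Mathlib

/-!
With `M` bounding `s (1 - s)` between `x` and `y` (e.g. `M = max x y`), the function
`t ↦ KL(x ‖ t) - (t - x)² / (2M)` has derivative `(t - x) (1 / (t (1 - t)) - 1 / M)`, which has the
sign of `t - x`. So it increases as `t` moves away from `x`, where it vanishes, and is
nonnegative at `t = y`.
-/

open Real Set Filter

theorem le_of_hasDerivAt_of_mul_sub_nonneg {f f' : ℝ → ℝ} {a b : ℝ}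
    (hf : ∀ t ∈ uIcc a b, HasDerivAt f (f' t) t) (hsign : ∀ t ∈ uIcc a b, 0 ≤ (t - a) * f' t) :
    f a ≤ f b := by
  have hcont : ContinuousOn f (uIcc a b) := fun t ht => (hf t ht).continuousAt.continuousWithinAt
  have hdiff : DifferentiableOn ℝ f (interior (uIcc a b)) := fun t ht =>
    (hf t (interior_subset ht)).differentiableAt.differentiableWithinAt
  rcases le_total a b with hab | hba
  · rw [uIcc_of_le hab] at hf hsign hcont hdiff
    refine monotoneOn_of_deriv_nonneg (convex_Icc a b) hcont hdiff (fun t ht => ?_)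
      ⟨le_rfl, hab⟩ ⟨hab, le_rfl⟩ hab
    rw [interior_Icc] at ht
    rw [(hf t (Ioo_subset_Icc_self ht)).deriv]
    exact nonneg_of_mul_nonneg_right (hsign t (Ioo_subset_Icc_self ht)) (sub_pos.2 ht.1)
  · rw [uIcc_of_ge hba] at hf hsign hcont hdiff
    refine antitoneOn_of_deriv_nonpos (convex_Icc b a) hcont hdiff (fun t ht => ?_)
      ⟨le_rfl, hba⟩ ⟨hba, le_rfl⟩ hba
    rw [interior_Icc] at ht
    rw [(hf t (Ioo_subset_Icc_self ht)).deriv]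
    exact nonpos_of_mul_nonneg_right (hsign t (Ioo_subset_Icc_self ht)) (sub_neg.2 ht.2)

noncomputable def bernoulliKL (x y : ℝ) : ℝ :=
  x * log (x / y) + (1 - x) * log ((1 - x) / (1 - y))

@[simp]
theorem bernoulliKL_self (x : ℝ) : bernoulliKL x x = 0 := by
  simp [bernoulliKL]

theorem hasDerivAt_bernoulliKL {x t : ℝ} (hx : x ∈ Ioo (0 : ℝ) 1) (ht : t ∈ Ioo (0 : ℝ) 1) :
    HasDerivAt (bernoulliKL x) ((t - x) / (t * (1 - t))) t := by
  obtain ⟨hx0, hx1⟩ := hx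
  have hlog := ((hasDerivAt_log ht.1.ne').const_sub (log x)).const_mul x
  have hlog' := (((hasDerivAt_log (sub_pos.2 ht.2).ne').comp t
    ((hasDerivAt_id t).const_sub 1)).const_sub (log (1 - x))).const_mul (1 - x)
  refine (hlog.add hlog').congr_of_eventuallyEq ?_ |>.congr_deriv ?_
  · filter_upwards [isOpen_Ioo.mem_nhds ht] with s hs
    rw [bernoulliKL, log_div hx0.ne' hs.1.ne', log_div (by linarith) (by linarith [hs.2])]
    rfl
  · have ht0 := ht.1.ne'
    have ht1 := (sub_pos.2 ht.2).ne'
    field_simp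
    ring

theorem sq_sub_div_le_bernoulliKL {x y M : ℝ} (hx : x ∈ Ioo (0 : ℝ) 1) (hy : y ∈ Ioo (0 : ℝ) 1)
    (hM : ∀ t ∈ uIcc x y, t * (1 - t) ≤ M) :
    (x - y) ^ 2 / (2 * M) ≤ bernoulliKL x y := by
  have hsub : uIcc x y ⊆ Ioo 0 1 := ordConnected_Ioo.uIcc_subset hx hy
  have hvar (t) (ht : t ∈ uIcc x y) : 0 < t * (1 - t) := by
    obtain ⟨h0, h1⟩ := hsub ht
    nlinarith
  have hderiv (t) (ht : t ∈ uIcc x y) :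
      HasDerivAt (fun t => bernoulliKL x t - (t - x) ^ 2 / (2 * M))
        ((t - x) / (t * (1 - t)) - (t - x) / M) t := by
    have hsq : HasDerivAt (fun s => (s - x) ^ 2 / (2 * M)) ((t - x) / M) t :=
      (((hasDerivAt_id' t).sub_const x).pow 2).div_const (2 * M) |>.congr_deriv (by
        field_simp
        ring)
    exact (hasDerivAt_bernoulliKL hx (hsub ht)).sub hsq
  have hsign (t) (ht : t ∈ uIcc x y) :
      0 ≤ (t - x) * ((t - x) / (t * (1 - t)) - (t - x) / M) :=
    calc (0 : ℝ) ≤ (t - x) ^ 2 * (1 / (t * (1 - t)) - 1 / M) :=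
          mul_nonneg (sq_nonneg _) (sub_nonneg.2 (one_div_le_one_div_of_le (hvar t ht) (hM t ht)))
      _ = _ := by ring
  simpa [sub_sq_comm y x] using le_of_hasDerivAt_of_mul_sub_nonneg hderiv hsign

/-- For `x, y ∈ (0,1)`, the Kullback-Leibler divergence from `Bernoulli(x)` to `Bernoulli(y)`,
given by `x·log(x/y) + (1-x)·log((1-x)/(1-y))`, is at least `(x-y)²/(2·max{x,y})`. -/
theorem bernoulli_klDiv_lower_bound (x y : ℝ) (hx : x ∈ Set.Ioo (0:ℝ) 1)
    (hy : y ∈ Set.Ioo (0:ℝ) 1) :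
    (x - y) ^ 2 / (2 * max x y) ≤
      x * Real.log (x / y) + (1 - x) * Real.log ((1 - x) / (1 - y)) := by
  refine sq_sub_div_le_bernoulliKL hx hy fun t ht => ?_
  calc t * (1 - t) ≤ t := by nlinarith [sq_nonneg t]
    _ ≤ max x y := ht.2
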